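/- Let (w_1,...,w_n) be a minimal lace diagram for (e_0,...,e_n). Then ell(s_k w_1) > ell(w_1) for all 1 <= k < e_0 and ell(w_n s_k) > ell(w_n) for all 1 <= k < e_n; equivalently, w_1^{-1}(k) < w_1^{-1}(k+1) for all 1 <= k < e_0 and w_n(k) < w_n(k+1) for all 1 <= k < e_n. -/

import Mathlib

open MvPolynomial

/-! Common setup.  Dots in columns, positions in permutations, and variable
indices are all 0-indexed: dot `q` (0-indexed) of column `i` is dot `q+1`
(1-indexed) in the paper, the variable `(i, j) : ℕ × ℕ` is the Chern root
`x^i_{j+1}`, and in the Schubert variable type `ℕ ⊕ ℕ`, `Sum.inl a` is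
`x_{a+1}` and `Sum.inr b` is `y_{b+1}`. -/

/-- Coxeter length = number of inversions of a (finitely supported) permutation of ℕ. -/
noncomputable def ell (w : Equiv.Perm ℕ) : ℕ :=
  {p : ℕ × ℕ | p.1 < p.2 ∧ w p.2 < w p.1}.ncard

/-- A finitely supported permutation of ℕ. -/
def FinSupp (w : Equiv.Perm ℕ) : Prop := {x | w x ≠ x}.Finite

/-- A lace diagram for the dimension vector `e 0, …, e n`, encoded as a sequence
`w 1, …, w n` of finitely supported permutations of ℕ (normalized so that
`w i = 1` outside `1 ≤ i ≤ n`): all descent positions of `w i` are `< e i` and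
all descent positions of `(w i)⁻¹` are `< e (i-1)` (0-indexed positions). -/
def IsLace (n : ℕ) (e : ℕ → ℕ) (w : ℕ → Equiv.Perm ℕ) : Prop :=
  (∀ i, i = 0 ∨ n < i → w i = 1) ∧
  ∀ i, 1 ≤ i → i ≤ n → FinSupp (w i) ∧
    (∀ k, w i (k + 1) < w i k → k < e i) ∧
    (∀ k, (w i)⁻¹ (k + 1) < (w i)⁻¹ k → k < e (i - 1))

/-- `chain w i k p = (w k)⁻¹ (⋯ ((w (i+1))⁻¹ p))` for `k ≥ i`, and `p` for `k ≤ i`. -/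
def chain (w : ℕ → Equiv.Perm ℕ) (i : ℕ) : ℕ → ℕ → ℕ
  | 0, p => p
  | k + 1, p => if k + 1 ≤ i then p else (w (k + 1))⁻¹ (chain w i k p)

/-- The rank conditions of a lace diagram: `rank e w i j` is the number of dots
`p < e i` of column `i` whose strand continues through column `j`. -/
noncomputable def rank (e : ℕ → ℕ) (w : ℕ → Equiv.Perm ℕ) (i j : ℕ) : ℕ :=
  {p : ℕ | p < e i ∧ ∀ k, i < k → k ≤ j → chain w i k p < e k}.ncard

/-- The lace diagram `w` has rank conditions `r` (for `0 ≤ i ≤ j ≤ n`). -/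
def RankEq (n : ℕ) (e : ℕ → ℕ) (w : ℕ → Equiv.Perm ℕ) (r : ℕ → ℕ → ℕ) : Prop :=
  ∀ i j, i ≤ j → j ≤ n → rank e w i j = r i j

/-- The length of a lace diagram. -/
noncomputable def diagLength (n : ℕ) (w : ℕ → Equiv.Perm ℕ) : ℕ :=
  ∑ i ∈ Finset.Icc 1 n, ell (w i)

/-- The expected codimension `d(r)`. -/
def codim (n : ℕ) (r : ℕ → ℕ → ℕ) : ℕ :=
  ∑ i ∈ Finset.range (n + 1), ∑ j ∈ Finset.range (n + 1),
    if i < j then (r i (j - 1) - r i j) * (r (i + 1) j - r i j) else 0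

/-- A minimal lace diagram: its length equals the expected codimension of its
rank conditions. -/
def IsMinimal (n : ℕ) (e : ℕ → ℕ) (w : ℕ → Equiv.Perm ℕ) : Prop :=
  IsLace n e w ∧ diagLength n w = codim n (rank e w)

/-- The longest element of `S m` (0-indexed), as a permutation of ℕ. -/
def longest (m : ℕ) : Equiv.Perm ℕ where
  toFun i := if i < m then m - 1 - i else i
  invFun i := if i < m then m - 1 - i else i
  left_inv i := by dsimp only; split_ifs <;> omega
  right_inv i := by dsimp only; split_ifs <;> omega

/-- Interchanging the x-variables `x (i+1)` and `x (i+2)` (0-indexed: `inl i`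
and `inl (i+1)`). -/
noncomputable def sX (i : ℕ) (f : MvPolynomial (ℕ ⊕ ℕ) ℤ) : MvPolynomial (ℕ ⊕ ℕ) ℤ :=
  rename (Sum.map (Equiv.swap i (i + 1)) id) f

/-- `S` is the family of double Schubert polynomials `S w = 𝔖_w(x; y)`:
it takes the prescribed product value on each longest element, it satisfies the
divided difference recursion `(x i - x (i+1)) * S (w * s i) = S w - (S w)^{s i}`
when `w` has a descent at `i` and `(S w)^{s i} = S w` otherwise, and only the
variables up to the last descents of `w` and `w⁻¹` occur in `S w`. -/
def IsSchubertFamily (S : Equiv.Perm ℕ → MvPolynomial (ℕ ⊕ ℕ) ℤ) : Prop :=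
  (∀ m : ℕ, S (longest m) =
      ∏ i ∈ Finset.range m, ∏ j ∈ Finset.range m,
        if i + j + 2 ≤ m then X (Sum.inl i) - X (Sum.inr j) else 1) ∧
  (∀ w : Equiv.Perm ℕ, FinSupp w → ∀ i : ℕ,
    (w (i + 1) < w i →
      (X (Sum.inl i) - X (Sum.inl (i + 1))) * S (w * Equiv.swap i (i + 1)) =
        S w - sX i (S w)) ∧
    (w i < w (i + 1) → sX i (S w) = S w)) ∧
  (∀ w : Equiv.Perm ℕ, FinSupp w → ∀ k l : ℕ,
    (∀ t, k ≤ t → ¬w (t + 1) < w t) → (∀ t, l ≤ t → ¬w⁻¹ (t + 1) < w⁻¹ t) →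
    ∀ v ∈ (S w).vars, (∃ a < k, v = Sum.inl a) ∨ (∃ b < l, v = Sum.inr b))

/-- The product `S(w) = 𝔖_{w 1}(x^1;x^0) ⋯ 𝔖_{w n}(x^n;x^{n-1})`, in the
variables `(i, j) = x^i_{j+1}`. -/
noncomputable def Sprod (n : ℕ) (S : Equiv.Perm ℕ → MvPolynomial (ℕ ⊕ ℕ) ℤ)
    (w : ℕ → Equiv.Perm ℕ) : MvPolynomial (ℕ × ℕ) ℤ :=
  ∏ i ∈ Finset.Icc 1 n,
    rename (Sum.elim (fun a => (i, a)) (fun b => (i - 1, b))) (S (w i))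

/-- The component-formula polynomial `Q_r`: the sum of `Sprod n S w` over all
minimal lace diagrams `w` with rank conditions `r`. -/
noncomputable def Qpoly (n : ℕ) (e : ℕ → ℕ) (r : ℕ → ℕ → ℕ)
    (S : Equiv.Perm ℕ → MvPolynomial (ℕ ⊕ ℕ) ℤ) : MvPolynomial (ℕ × ℕ) ℤ :=
  ∑ᶠ (w : ℕ → Equiv.Perm ℕ) (_ : IsMinimal n e w ∧ RankEq n e w r), Sprod n S w

/-- The shifted permutation `1^k × w`: fixes `0, …, k-1` (0-indexed) and sends
`k + j` to `k + w j`. -/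
def shiftPerm (k : ℕ) (w : Equiv.Perm ℕ) : Equiv.Perm ℕ where
  toFun j := if j < k then j else w (j - k) + k
  invFun j := if j < k then j else w⁻¹ (j - k) + k
  left_inv j := by
    dsimp only
    by_cases h : j < k
    · simp [h]
    · have h1 : ¬ w (j - k) + k < k := by omega
      simp only [if_neg h, if_neg h1, Nat.add_sub_cancel, Equiv.Perm.inv_def, Equiv.symm_apply_apply]
      omega
  right_inv j := by
    dsimp only
    by_cases h : j < k
    · simp [h]
    · have h1 : ¬ w⁻¹ (j - k) + k < k := by omega
      rw [Equiv.Perm.inv_def] at h1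
      simp only [if_neg h, if_neg h1, Nat.add_sub_cancel, Equiv.Perm.inv_def, Equiv.apply_symm_apply]
      omega

/-- The lace diagram `(1^k × w 1, …, 1^k × w n)`. -/
def shiftDiag (k : ℕ) (w : ℕ → Equiv.Perm ℕ) : ℕ → Equiv.Perm ℕ :=
  fun i => shiftPerm k (w i)

/-- The transformation of lace diagrams, allowed at `(i, j)` (0-indexed `j`,
so `j + 1 < e i`) when exactly one of the two descent conditions holds; it
replaces `w i` by `w i * s j` and `w (i+1)` by `s j * w (i+1)`. -/
def TransStep (n : ℕ) (e : ℕ → ℕ) (w w' : ℕ → Equiv.Perm ℕ) : Prop :=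
  IsLace n e w ∧ ∃ i j, 1 ≤ i ∧ i + 1 ≤ n ∧ j + 1 < e i ∧
    Xor' (w i (j + 1) < w i j) ((w (i + 1))⁻¹ (j + 1) < (w (i + 1))⁻¹ j) ∧
    w' = Function.update (Function.update w i (w i * Equiv.swap j (j + 1))) (i + 1)
          (Equiv.swap j (j + 1) * w (i + 1))

/-- The column where the strand through dot `q` of column `c` starts. -/
def startCol (e : ℕ → ℕ) (w : ℕ → Equiv.Perm ℕ) : ℕ → ℕ → ℕ
  | 0, _ => 0
  | c + 1, q => if w (c + 1) q < e c then startCol e w c (w (c + 1) q) else c + 1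

/-- The starting dot `(column, position)` of the strand through dot `q` of column `c`. -/
def startDot (e : ℕ → ℕ) (w : ℕ → Equiv.Perm ℕ) : ℕ → ℕ → ℕ × ℕ
  | 0, q => (0, q)
  | c + 1, q => if w (c + 1) q < e c then startDot e w c (w (c + 1) q) else (c + 1, q)

def endColAux (e : ℕ → ℕ) (w : ℕ → Equiv.Perm ℕ) : ℕ → ℕ → ℕ → ℕ
  | 0, c, _ => c
  | f + 1, c, q =>
      if (w (c + 1))⁻¹ q < e (c + 1) then endColAux e w f (c + 1) ((w (c + 1))⁻¹ q) else c

/-- The column where the strand through dot `q` of column `c` terminates. -/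
def endCol (n : ℕ) (e : ℕ → ℕ) (w : ℕ → Equiv.Perm ℕ) (c q : ℕ) : ℕ :=
  endColAux e w (n - c) c q

/-- `w` is the left-most lace diagram (for its rank conditions): it is a lace
diagram such that in every column the strands are sorted from top to bottom by
starting column (ascending) and then by terminating column (descending), exactly
as produced by the construction which adds, for `i = 0, …, n` and `j = n, …, i`,
all strands from column `i` to column `j` to the bottom of the diagram; and
strands with the same start and end do not cross. -/
def IsLeftmost (n : ℕ) (e : ℕ → ℕ) (w : ℕ → Equiv.Perm ℕ) : Prop :=
  IsLace n e w ∧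
  (∀ c, c ≤ n → ∀ q q', q < q' → q' < e c →
    startCol e w c q < startCol e w c q' ∨
      (startCol e w c q = startCol e w c q' ∧ endCol n e w c q' ≤ endCol n e w c q)) ∧
  (∀ c, 1 ≤ c → c ≤ n → ∀ q q', q < q' → q' < e c →
    startCol e w c q = startCol e w c q' → endCol n e w c q = endCol n e w c q' →
    w c q < w c q')

/-- The substitution homomorphism `φ_u` of a lace diagram `u`: it sends the
variable `x^i_j` to the variable `b_S` of the strand `S` of `u` through dot
`(i, j)`, where the strand variables are realized as the variables indexed by
the starting dots of strands. -/
noncomputable def phiMap (e : ℕ → ℕ) (u : ℕ → Equiv.Perm ℕ) :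
    MvPolynomial (ℕ × ℕ) ℤ →ₐ[ℤ] MvPolynomial (ℕ × ℕ) ℤ :=
  rename fun p => startDot e u p.1 p.2

/-- The product of the simple transpositions `s (i+1)` (1-indexed) for `i` in `l`. -/
def wordProd (l : List ℕ) : Equiv.Perm ℕ := (l.map fun i => Equiv.swap i (i + 1)).prod

/-- A reduced word for a finitely supported permutation of ℕ. -/
def IsReducedWord (u : Equiv.Perm ℕ) (l : List ℕ) : Prop :=
  wordProd l = u ∧ l.length = ell u

/-- Bruhat order: some reduced word for `u` contains a subword which is a
reduced word for `w`. -/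
def BruhatLE (w u : Equiv.Perm ℕ) : Prop :=
  ∃ l l', IsReducedWord u l ∧ IsReducedWord w l' ∧ l'.Sublist l

/-! Name the wires of a lace diagram by their positions in column `0`. For `i < j`, a wire
leaving at `j` (alive in columns `i, …, j - 1`, dead in column `j`) starts above and ends below
a wire entering after `i` (dead in column `i`, alive in columns `i + 1, …, j`), so the two must
cross in one of the columns `i + 1, …, j`. Counted together with `i` and `j`, there are exactly
`d(r)` such pairs of wires, and sending each to the first crossing of its two wires is an
injection into the `ℓ(w)` crossings of the diagram. An inverse descent of `w 1` below `e 0`, or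
a descent of `w n` below `e n`, is a crossing of two wires both alive in column `0`, resp.
column `n`, so it is not such a first crossing, and then `d(r) < ℓ(w)`. -/

open Finset

section Inversions

variable {v : Equiv.Perm ℕ} {N : ℕ}

def inversionSet (v : Equiv.Perm ℕ) : Set (ℕ × ℕ) := {p | p.1 < p.2 ∧ v p.2 < v p.1}

lemma FinSupp.exists_fixed_ge (hv : FinSupp v) : ∃ N, ∀ x, N ≤ x → v x = x := by
  obtain ⟨b, hb⟩ := hv.bddAbove
  exact ⟨b + 1, fun x hx => by_contra fun h => absurd (hb h) (by omega)⟩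

lemma FinSupp.inv (hv : FinSupp v) : FinSupp v⁻¹ := by
  have hsupp : {x | v⁻¹ x ≠ x} = {x | v x ≠ x} := by
    ext x
    exact not_congr (Equiv.Perm.inv_eq_iff_eq.trans eq_comm)
  unfold FinSupp
  rwa [hsupp]

lemma apply_lt_of_fixed_ge (hv : ∀ x, N ≤ x → v x = x) {x : ℕ} (hx : x < N) : v x < N := by
  by_contra hc
  have := v.injective (hv _ (not_lt.mp hc))
  omega

lemma inv_fixed_ge (hv : ∀ x, N ≤ x → v x = x) : ∀ x, N ≤ x → v⁻¹ x = x :=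
  fun x hx => Equiv.Perm.inv_eq_iff_eq.mpr (hv x hx).symm

lemma inversionSet_eq_filter (hv : ∀ x, N ≤ x → v x = x) :
    inversionSet v = ↑((range N ×ˢ range N).filter fun p => p.1 < p.2 ∧ v p.2 < v p.1) := by
  ext ⟨a, b⟩
  simp only [inversionSet, Set.mem_ofPred_eq, coe_filter, mem_product, mem_range]
  refine ⟨fun ⟨hab, hv'⟩ => ⟨⟨?_, ?_⟩, hab, hv'⟩, fun h => h.2⟩ <;>
  · by_contra hc
    have hb := hv b (by omega)
    rcases lt_or_ge a N with ha | ha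
    · have := apply_lt_of_fixed_ge hv ha; omega
    · have := hv a ha; omega

lemma ell_eq_card_filter (hv : ∀ x, N ≤ x → v x = x) :
    ell v = ((range N ×ˢ range N).filter fun p => p.1 < p.2 ∧ v p.2 < v p.1).card := by
  rw [ell, ← inversionSet, inversionSet_eq_filter hv, Set.ncard_coe_finset]

lemma FinSupp.finite_inversionSet (hv : FinSupp v) : (inversionSet v).Finite := by
  obtain ⟨N, hN⟩ := hv.exists_fixed_ge
  rw [inversionSet_eq_filter hN]
  exact Finset.finite_toSet _

lemma ell_inv (v : Equiv.Perm ℕ) : ell v⁻¹ = ell v := by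
  have himage : inversionSet v⁻¹ = (fun p : ℕ × ℕ => (v p.2, v p.1)) '' inversionSet v := by
    ext ⟨a, b⟩
    refine ⟨fun ⟨hab, hv⟩ => ⟨(v⁻¹ b, v⁻¹ a), ⟨hv, by simpa using hab⟩, by simp⟩, ?_⟩
    rintro ⟨⟨p, q⟩, ⟨hpq, hv⟩, he⟩
    obtain ⟨rfl, rfl⟩ := Prod.mk.inj he
    exact ⟨hv, by simpa using hpq⟩
  rw [ell, ell, ← inversionSet, ← inversionSet, himage, Set.ncard_image_of_injective]
  intro p q h
  obtain ⟨h2, h1⟩ := Prod.mk.inj h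
  exact Prod.ext (v.injective h1) (v.injective h2)

lemma ell_mul_swap (hv : FinSupp v) {k : ℕ} (h : v k < v (k + 1)) :
    ell (v * Equiv.swap k (k + 1)) = ell v + 1 := by
  set s := Equiv.swap k (k + 1)
  have hs : ∀ x, s (s x) = x := Equiv.swap_apply_self k (k + 1)
  have hmono : ∀ a b, a < b → (a, b) ≠ (k, k + 1) → s a < s b := by
    intro a b hab hne
    simp only [ne_eq, Prod.mk.injEq] at hne
    simp only [s, Equiv.swap_apply_def]
    split_ifs <;> omega
  have hkey : inversionSet (v * s) =
      insert (k, k + 1) (Prod.map s s '' inversionSet v) := by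
    ext ⟨a, b⟩
    simp only [inversionSet, Set.mem_insert_iff, Set.mem_image, Set.mem_ofPred_eq,
      Equiv.Perm.mul_apply, Prod.exists, Prod.map, Prod.mk.injEq]
    constructor
    · rintro ⟨hab, hvab⟩
      by_cases hne : (a, b) = (k, k + 1)
      · exact Or.inl (Prod.mk.inj hne)
      · exact Or.inr ⟨s a, s b, ⟨hmono a b hab hne, hvab⟩, hs a, hs b⟩
    · rintro (⟨rfl, rfl⟩ | ⟨a, b, ⟨hab, hvab⟩, rfl, rfl⟩)
      · simpa [s] using h
      · refine ⟨hmono a b hab ?_, by simpa only [hs] using hvab⟩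
        rintro ⟨rfl, rfl⟩
        omega
  have hnotMem : (k, k + 1) ∉ Prod.map s s '' inversionSet v := by
    rintro ⟨⟨a, b⟩, ⟨hab, -⟩, he⟩
    obtain ⟨ha, hb⟩ := Prod.mk.inj he
    rw [← hs a, ← hs b, ha, hb] at hab
    simp [s] at hab
  have hinj : Function.Injective (Prod.map s s) := s.injective.prodMap s.injective
  rw [ell, ell, ← inversionSet, ← inversionSet, hkey,
    Set.ncard_insert_of_notMem hnotMem (hv.finite_inversionSet.image _),
    Set.ncard_image_of_injective _ hinj]

lemma ell_swap_mul (hv : FinSupp v) {k : ℕ} (h : v⁻¹ k < v⁻¹ (k + 1)) :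
    ell (Equiv.swap k (k + 1) * v) = ell v + 1 := by
  rw [← ell_inv, mul_inv_rev, Equiv.swap_inv, ell_mul_swap hv.inv h, ell_inv]

end Inversions

section Wires

/-- `partialProd w k = w 1 * ⋯ * w k`. Extending every column to all of `ℕ` and naming each
strand (wire) by its position in column `0`, position `x` of column `k` lies on wire
`partialProd w k x`; wire `a` is alive in column `k` when its position
`(partialProd w k)⁻¹ a` there is `< e k`. -/
def partialProd (w : ℕ → Equiv.Perm ℕ) : ℕ → Equiv.Perm ℕ
  | 0 => 1
  | k + 1 => partialProd w k * w (k + 1)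

variable {w : ℕ → Equiv.Perm ℕ}

@[simp]
lemma partialProd_zero : partialProd w 0 = 1 := rfl

lemma partialProd_one : partialProd w 1 = w 1 := one_mul _

lemma partialProd_inv_apply_partialProd_succ (k x : ℕ) :
    (partialProd w k)⁻¹ (partialProd w (k + 1) x) = w (k + 1) x := by
  simp [partialProd]

lemma chain_eq_partialProd {i k : ℕ} (hik : i ≤ k) (p : ℕ) :
    chain w i k p = (partialProd w k)⁻¹ (partialProd w i p) := by
  induction k with
  | zero => obtain rfl := Nat.le_zero.mp hik; simp [chain]
  | succ k ih =>
    rcases hik.eq_or_lt with rfl | hik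
    · simp [chain]
    · rw [chain, if_neg (by omega), ih (by omega)]
      simp [partialProd, mul_inv_rev]

lemma partialProd_fixed_ge {N : ℕ} (hfix : ∀ k x, N ≤ x → w k x = x) (k : ℕ) :
    ∀ x, N ≤ x → partialProd w k x = x := by
  induction k with
  | zero => simp
  | succ k ih =>
    intro x hx
    simp [partialProd, hfix (k + 1) x hx, ih x hx]

end Wires

section Counting

variable (N n : ℕ) (e : ℕ → ℕ) (w : ℕ → Equiv.Perm ℕ)

def aliveWires (i j : ℕ) : Finset ℕ :=
  (range N).filter fun a => ∀ k ∈ Icc i j, (partialProd w k)⁻¹ a < e k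

def leavingWires (i j : ℕ) : Finset ℕ := aliveWires N e w i (j - 1) \ aliveWires N e w i j

def enteringWires (i j : ℕ) : Finset ℕ := aliveWires N e w (i + 1) j \ aliveWires N e w i j

def forcedCrossings : Finset ((_ : ℕ × ℕ) × ℕ × ℕ) :=
  ((range (n + 1) ×ˢ range (n + 1)).filter fun ij => ij.1 < ij.2).sigma
    fun ij => leavingWires N e w ij.1 ij.2 ×ˢ enteringWires N e w ij.1 ij.2

def crossingsAt (k : ℕ) : Finset (ℕ × ℕ) :=
  ((range N ×ˢ range N).filter fun p => p.1 < p.2 ∧ w k p.2 < w k p.1).image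
    (Prod.map (partialProd w k) (partialProd w k))

def crossings : Finset ((_ : ℕ) × ℕ × ℕ) := (Icc 1 n).sigma (crossingsAt N w)

variable {N n e w}

lemma mem_aliveWires {i j a : ℕ} :
    a ∈ aliveWires N e w i j ↔ a < N ∧ ∀ k, i ≤ k → k ≤ j → (partialProd w k)⁻¹ a < e k := by
  simp [aliveWires]

lemma aliveWires_subset_pred_right (i j : ℕ) : aliveWires N e w i j ⊆ aliveWires N e w i (j - 1) :=
  fun _ ha => mem_aliveWires.mpr
    ⟨(mem_aliveWires.mp ha).1, fun k hik hkj => (mem_aliveWires.mp ha).2 k hik (by omega)⟩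

lemma aliveWires_subset_succ_left (i j : ℕ) : aliveWires N e w i j ⊆ aliveWires N e w (i + 1) j :=
  fun _ ha => mem_aliveWires.mpr
    ⟨(mem_aliveWires.mp ha).1, fun k hik hkj => (mem_aliveWires.mp ha).2 k (by omega) hkj⟩

lemma mem_leavingWires {i j p : ℕ} (hij : i < j) :
    p ∈ leavingWires N e w i j ↔
      p < N ∧ (∀ k, i ≤ k → k < j → (partialProd w k)⁻¹ p < e k) ∧
        e j ≤ (partialProd w j)⁻¹ p := by
  simp only [leavingWires, mem_sdiff, mem_aliveWires]
  constructor
  · rintro ⟨⟨hp, halive⟩, hdead⟩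
    refine ⟨hp, fun k hik hkj => halive k hik (by omega), not_lt.mp fun hj => hdead ⟨hp, ?_⟩⟩
    intro k hik hkj
    rcases hkj.lt_or_eq with hkj | rfl
    · exact halive k hik (by omega)
    · exact hj
  · rintro ⟨hp, halive, hdead⟩
    exact ⟨⟨hp, fun k hik hkj => halive k hik (by omega)⟩,
      fun h => (h.2 j hij.le le_rfl).not_ge hdead⟩

lemma mem_enteringWires {i j q : ℕ} (hij : i < j) :
    q ∈ enteringWires N e w i j ↔
      q < N ∧ (∀ k, i < k → k ≤ j → (partialProd w k)⁻¹ q < e k) ∧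
        e i ≤ (partialProd w i)⁻¹ q := by
  simp only [enteringWires, mem_sdiff, mem_aliveWires]
  constructor
  · rintro ⟨⟨hq, halive⟩, hdead⟩
    refine ⟨hq, fun k hik hkj => halive k hik hkj, not_lt.mp fun hi => hdead ⟨hq, ?_⟩⟩
    intro k hik hkj
    rcases hik.lt_or_eq with hik | rfl
    · exact halive k hik hkj
    · exact hi
  · rintro ⟨hq, halive, hdead⟩
    exact ⟨⟨hq, fun k hik hkj => halive k hik hkj⟩,
      fun h => (h.2 i le_rfl hij.le).not_ge hdead⟩

lemma mem_forcedCrossings {i j p q : ℕ} :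
    ⟨(i, j), (p, q)⟩ ∈ forcedCrossings N n e w ↔
      j ≤ n ∧ i < j ∧ p ∈ leavingWires N e w i j ∧ q ∈ enteringWires N e w i j := by
  simp only [forcedCrossings, mem_sigma, mem_filter, mem_product, mem_range]
  exact ⟨fun ⟨⟨⟨_, hj⟩, hij⟩, hp, hq⟩ => ⟨by omega, hij, hp, hq⟩,
    fun ⟨hj, hij, hp, hq⟩ => ⟨⟨⟨by omega, by omega⟩, hij⟩, hp, hq⟩⟩

lemma mem_crossingsAt_succ {k a b : ℕ} (hfix : ∀ k x, N ≤ x → w k x = x) :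
    (a, b) ∈ crossingsAt N w (k + 1) ↔ a < N ∧ b < N ∧
      (partialProd w (k + 1))⁻¹ a < (partialProd w (k + 1))⁻¹ b ∧
      (partialProd w k)⁻¹ b < (partialProd w k)⁻¹ a := by
  have hfixProd := partialProd_fixed_ge hfix (k + 1)
  simp only [crossingsAt, mem_image, mem_filter, mem_product, mem_range, Prod.exists,
    Prod.map, Prod.mk.injEq]
  constructor
  · rintro ⟨x, y, ⟨⟨hx, hy⟩, hxy, hwxy⟩, rfl, rfl⟩
    simpa [apply_lt_of_fixed_ge hfixProd hx, apply_lt_of_fixed_ge hfixProd hy,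
      partialProd_inv_apply_partialProd_succ] using ⟨hxy, hwxy⟩
  · rintro ⟨ha, hb, hab, hba⟩
    refine ⟨_, _, ⟨⟨apply_lt_of_fixed_ge (inv_fixed_ge hfixProd) ha,
      apply_lt_of_fixed_ge (inv_fixed_ge hfixProd) hb⟩, hab, ?_⟩, by simp, by simp⟩
    simpa [← partialProd_inv_apply_partialProd_succ] using hba

variable (hfix : ∀ k x, N ≤ x → w k x = x) (he : ∀ k, k ≤ n → e k ≤ N)
include hfix

lemma ell_eq_card_crossingsAt (k : ℕ) : ell (w k) = (crossingsAt N w k).card := by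
  rw [ell_eq_card_filter (hfix k), crossingsAt, card_image_of_injective]
  exact (partialProd w k).injective.prodMap (partialProd w k).injective

lemma diagLength_eq_card_crossings : diagLength n w = (crossings N n w).card := by
  rw [diagLength, crossings, card_sigma]
  exact sum_congr rfl fun k _ => ell_eq_card_crossingsAt hfix k

include he

lemma rank_eq_card_aliveWires {i j : ℕ} (hij : i ≤ j) (hj : j ≤ n) :
    rank e w i j = (aliveWires N e w i j).card := by
  have himage : partialProd w i ''
      {p | p < e i ∧ ∀ k, i < k → k ≤ j → chain w i k p < e k} = ↑(aliveWires N e w i j) := by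
    ext a
    simp only [Set.mem_image, Set.mem_ofPred_eq, mem_coe, mem_aliveWires]
    constructor
    · rintro ⟨p, ⟨hp, hchain⟩, rfl⟩
      have hpN : p < N := hp.trans_le (he i (hij.trans hj))
      refine ⟨apply_lt_of_fixed_ge (partialProd_fixed_ge hfix i) hpN, fun k hik hkj => ?_⟩
      rcases hik.eq_or_lt with rfl | hik
      · simpa using hp
      · simpa [chain_eq_partialProd hik.le] using hchain k hik hkj
    · rintro ⟨-, halive⟩
      refine ⟨(partialProd w i)⁻¹ a, ⟨halive i le_rfl hij, fun k hik hkj => ?_⟩, by simp⟩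
      simpa [chain_eq_partialProd hik.le] using halive k hik.le hkj
  rw [rank, ← Set.ncard_image_of_injective _ (partialProd w i).injective, himage,
    Set.ncard_coe_finset]

lemma codim_eq_card_forcedCrossings : codim n (rank e w) = (forcedCrossings N n e w).card := by
  rw [forcedCrossings, card_sigma, sum_filter, codim, ← sum_product']
  refine sum_congr rfl fun ⟨i, j⟩ hij => ?_
  simp only [mem_product, mem_range] at hij
  split_ifs with h
  · rw [card_product, leavingWires, enteringWires,
      card_sdiff_of_subset (aliveWires_subset_pred_right i j),
      card_sdiff_of_subset (aliveWires_subset_succ_left i j),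
      rank_eq_card_aliveWires hfix he, rank_eq_card_aliveWires hfix he,
      rank_eq_card_aliveWires hfix he] <;> dsimp only at h <;> omega
  · rfl

end Counting

section FirstCrossing

variable {N n : ℕ} {e : ℕ → ℕ} {w : ℕ → Equiv.Perm ℕ}

variable (w) in
noncomputable def firstCrossCol (i p q : ℕ) : ℕ :=
  sInf {m | i < m ∧ (partialProd w m)⁻¹ q < (partialProd w m)⁻¹ p}

variable (w) in
noncomputable def firstCrossing (x : (_ : ℕ × ℕ) × ℕ × ℕ) : (_ : ℕ) × ℕ × ℕ :=
  ⟨firstCrossCol w x.1.1 x.2.1 x.2.2, (x.2.2, x.2.1)⟩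

lemma firstCrossCol_spec {i j p q : ℕ} (hij : i < j) (hp : p ∈ leavingWires N e w i j)
    (hq : q ∈ enteringWires N e w i j) :
    i < firstCrossCol w i p q ∧ firstCrossCol w i p q ≤ j ∧
      (partialProd w (firstCrossCol w i p q))⁻¹ q <
        (partialProd w (firstCrossCol w i p q))⁻¹ p ∧
      (partialProd w (firstCrossCol w i p q - 1))⁻¹ p <
        (partialProd w (firstCrossCol w i p q - 1))⁻¹ q := by
  obtain ⟨-, hp_alive, hp_dead⟩ := (mem_leavingWires hij).mp hp
  obtain ⟨-, hq_alive, hq_dead⟩ := (mem_enteringWires hij).mp hq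
  unfold firstCrossCol
  set S := {m | i < m ∧ (partialProd w m)⁻¹ q < (partialProd w m)⁻¹ p}
  have hjS : j ∈ S := ⟨hij, (hq_alive j hij le_rfl).trans_le hp_dead⟩
  obtain ⟨hik, hkS⟩ : sInf S ∈ S := Nat.sInf_mem ⟨j, hjS⟩
  refine ⟨hik, Nat.sInf_le hjS, hkS, ?_⟩
  rcases (Nat.le_sub_one_of_lt hik).eq_or_lt with hi | hi
  · rw [← hi]
    exact (hp_alive i le_rfl hij).trans_le hq_dead
  · have hnotS : sInf S - 1 ∉ S := Nat.notMem_of_lt_sInf (by omega)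
    have hpq : p ≠ q := by
      rintro rfl
      exact (hp_alive i le_rfl hij).not_ge hq_dead
    have hne := (partialProd w (sInf S - 1))⁻¹.injective.ne hpq
    simp only [S, Set.mem_ofPred_eq, not_and, not_lt] at hnotS
    exact lt_of_le_of_ne (hnotS hi) hne

lemma firstCrossing_mem_crossings (hfix : ∀ k x, N ≤ x → w k x = x)
    {x : (_ : ℕ × ℕ) × ℕ × ℕ} (hx : x ∈ forcedCrossings N n e w) :
    firstCrossing w x ∈ crossings N n w := by
  obtain ⟨⟨i, j⟩, p, q⟩ := x
  obtain ⟨hjn, hij, hp, hq⟩ := mem_forcedCrossings.mp hx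
  obtain ⟨hik, hkj, hcross, hcross'⟩ := firstCrossCol_spec hij hp hq
  obtain ⟨m, hm⟩ := Nat.exists_eq_add_one_of_ne_zero (n := firstCrossCol w i p q) (by omega)
  rw [hm] at hik hkj hcross hcross'
  rw [Nat.add_sub_cancel] at hcross'
  simp only [firstCrossing, crossings, mem_sigma, mem_Icc, hm]
  exact ⟨⟨by omega, by omega⟩, (mem_crossingsAt_succ hfix).mpr
    ⟨((mem_enteringWires hij).mp hq).1, ((mem_leavingWires hij).mp hp).1, hcross, hcross'⟩⟩

lemma left_eq_of_mem_enteringWires {i j i' j' q : ℕ} (hij : i < j) (hi'j' : i' < j')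
    (hq : q ∈ enteringWires N e w i j) (hq' : q ∈ enteringWires N e w i' j')
    (hi'j : i' < j) (hij' : i < j') : i = i' := by
  obtain ⟨-, halive, hdead⟩ := (mem_enteringWires hij).mp hq
  obtain ⟨-, halive', hdead'⟩ := (mem_enteringWires hi'j').mp hq'
  rcases lt_trichotomy i i' with h | h | h
  · exact absurd hdead' (halive i' h hi'j.le).not_ge
  · exact h
  · exact absurd hdead (halive' i h hij'.le).not_ge

lemma right_eq_of_mem_leavingWires {i j i' j' p : ℕ} (hij : i < j) (hi'j' : i' < j')
    (hp : p ∈ leavingWires N e w i j) (hp' : p ∈ leavingWires N e w i' j')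
    (hi'j : i' < j) (hij' : i < j') : j = j' := by
  obtain ⟨-, halive, hdead⟩ := (mem_leavingWires hij).mp hp
  obtain ⟨-, halive', hdead'⟩ := (mem_leavingWires hi'j').mp hp'
  rcases lt_trichotomy j j' with h | h | h
  · exact absurd hdead (halive' j hi'j.le h).not_ge
  · exact h
  · exact absurd hdead' (halive j' hij'.le h).not_ge

lemma firstCrossing_injOn : Set.InjOn (firstCrossing w) (forcedCrossings N n e w) := by
  rintro ⟨⟨i, j⟩, p, q⟩ hx ⟨⟨i', j'⟩, p', q'⟩ hy hxy
  obtain ⟨-, hij, hp, hq⟩ := mem_forcedCrossings.mp hx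
  obtain ⟨-, hi'j', hp', hq'⟩ := mem_forcedCrossings.mp hy
  simp only [firstCrossing, Sigma.mk.inj_iff, Prod.mk.injEq, heq_eq_eq] at hxy
  obtain ⟨hk, rfl, rfl⟩ := hxy
  obtain ⟨hik, hkj, -⟩ := firstCrossCol_spec hij hp hq
  obtain ⟨hi'k, hkj', -⟩ := firstCrossCol_spec hi'j' hp' hq'
  obtain rfl := left_eq_of_mem_enteringWires hij hi'j' hq hq' (by omega) (by omega)
  obtain rfl := right_eq_of_mem_leavingWires hij hi'j' hp hp' (by omega) (by omega)
  rfl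

end FirstCrossing

section Minimal

variable {N n : ℕ} {e : ℕ → ℕ} {w : ℕ → Equiv.Perm ℕ}
  (hfix : ∀ k x, N ≤ x → w k x = x) (he : ∀ k, k ≤ n → e k ≤ N)
include hfix he

lemma codim_lt_diagLength_of_unforced {k a b : ℕ} (hk : k ∈ Icc 1 n)
    (hab : (a, b) ∈ crossingsAt N w k)
    (hunforced : (∀ i < k, (partialProd w i)⁻¹ a < e i) ∨
      ∀ j, k ≤ j → j ≤ n → (partialProd w j)⁻¹ b < e j) :
    codim n (rank e w) < diagLength n w := by
  have hmiss : ∀ x ∈ forcedCrossings N n e w, firstCrossing w x ≠ ⟨k, (a, b)⟩ := by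
    rintro ⟨⟨i, j⟩, p, q⟩ hx hxk
    obtain ⟨hjn, hij, hp, hq⟩ := mem_forcedCrossings.mp hx
    obtain ⟨hik, hkj, -⟩ := firstCrossCol_spec hij hp hq
    simp only [firstCrossing, Sigma.mk.inj_iff, Prod.mk.injEq, heq_eq_eq] at hxk
    obtain ⟨rfl, rfl, rfl⟩ := hxk
    rcases hunforced with ha | hb
    · exact (ha i hik).not_ge ((mem_enteringWires hij).mp hq).2.2
    · exact (hb j hkj hjn).not_ge ((mem_leavingWires hij).mp hp).2.2
  have hsub : (forcedCrossings N n e w).image (firstCrossing w) ⊆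
      (crossings N n w).erase ⟨k, (a, b)⟩ := by
    intro t ht
    obtain ⟨x, hx, rfl⟩ := mem_image.mp ht
    exact mem_erase.mpr ⟨hmiss x hx, firstCrossing_mem_crossings hfix hx⟩
  have hmem : (⟨k, (a, b)⟩ : (_ : ℕ) × ℕ × ℕ) ∈ crossings N n w := mem_sigma.mpr ⟨hk, hab⟩
  calc codim n (rank e w) = ((forcedCrossings N n e w).image (firstCrossing w)).card := by
        rw [codim_eq_card_forcedCrossings hfix he, card_image_of_injOn firstCrossing_injOn]
    _ ≤ ((crossings N n w).erase ⟨k, (a, b)⟩).card := card_le_card hsub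
    _ < (crossings N n w).card := card_erase_lt_of_mem hmem
    _ = diagLength n w := (diagLength_eq_card_crossings hfix).symm

lemma codim_lt_diagLength_of_first_inv_descent (hn : 1 ≤ n) {k : ℕ} (hk : k + 1 < e 0)
    (hdesc : (w 1)⁻¹ (k + 1) < (w 1)⁻¹ k) : codim n (rank e w) < diagLength n w := by
  have he0 := he 0 (Nat.zero_le n)
  refine codim_lt_diagLength_of_unforced hfix he (a := k + 1) (b := k) (mem_Icc.mpr ⟨le_rfl, hn⟩)
    ((mem_crossingsAt_succ hfix).mpr ⟨by omega, by omega, ?_, ?_⟩) (Or.inl fun i hi => ?_)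
  · rwa [partialProd_one]
  · simp
  · obtain rfl : i = 0 := by omega
    simpa using hk

lemma codim_lt_diagLength_of_last_descent (hn : 1 ≤ n) {k : ℕ} (hk : k + 1 < e n)
    (hdesc : w n (k + 1) < w n k) : codim n (rank e w) < diagLength n w := by
  obtain ⟨m, rfl⟩ := Nat.exists_eq_add_one_of_ne_zero (n := n) (by omega)
  have hen := he (m + 1) le_rfl
  have hfixProd := partialProd_fixed_ge hfix (m + 1)
  refine codim_lt_diagLength_of_unforced hfix he (a := partialProd w (m + 1) k)
    (b := partialProd w (m + 1) (k + 1)) (mem_Icc.mpr ⟨hn, le_rfl⟩)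
    ((mem_crossingsAt_succ hfix).mpr ⟨apply_lt_of_fixed_ge hfixProd (by omega),
      apply_lt_of_fixed_ge hfixProd (by omega), by simp, ?_⟩) (Or.inr fun j hj hjn => ?_)
  · simpa only [partialProd_inv_apply_partialProd_succ] using hdesc
  · obtain rfl : j = m + 1 := by omega
    simpa using hk

end Minimal

lemma IsLace.exists_bound {n : ℕ} {e : ℕ → ℕ} {w : ℕ → Equiv.Perm ℕ} (h : IsLace n e w) :
    ∃ N, (∀ k x, N ≤ x → w k x = x) ∧ ∀ k, k ≤ n → e k ≤ N := by
  have hfin : (⋃ k ∈ Icc 1 n, {x | w k x ≠ x}).Finite :=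
    (Icc 1 n).finite_toSet.biUnion fun k hk => (h.2 k (mem_Icc.mp hk).1 (mem_Icc.mp hk).2).1
  obtain ⟨b, hb⟩ := hfin.bddAbove
  refine ⟨max (b + 1) ((range (n + 1)).sup e), fun k x hx => ?_, fun k hk => ?_⟩
  · by_cases hk : k ∈ Icc 1 n
    · by_contra hne
      have := hb (Set.mem_biUnion hk hne)
      omega
    · rw [h.1 k (by simp only [mem_Icc] at hk; omega), Equiv.Perm.one_apply]
  · exact (le_sup (mem_range.mpr (Nat.lt_succ_of_le hk))).trans (le_max_right _ _)

/-- for a minimal lace diagram, `ℓ(s k * w 1) > ℓ(w 1)` for all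
`1 ≤ k < e 0` (0-indexed: `k + 1 < e 0`), and `ℓ(w n * s k) > ℓ(w n)` for all
`1 ≤ k < e n`; equivalently `(w 1)⁻¹` has no descents before `e 0` and `w n` has
no descents before `e n`. -/
theorem minimal_first_last (n : ℕ) (hn : 1 ≤ n) (e : ℕ → ℕ)
    (w : ℕ → Equiv.Perm ℕ) (hw : IsMinimal n e w) :
    (∀ k, k + 1 < e 0 →
      ell (w 1) < ell (Equiv.swap k (k + 1) * w 1) ∧ (w 1)⁻¹ k < (w 1)⁻¹ (k + 1)) ∧
    (∀ k, k + 1 < e n →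
      ell (w n) < ell (w n * Equiv.swap k (k + 1)) ∧ w n k < w n (k + 1)) := by
  obtain ⟨hlace, hmin⟩ := hw
  obtain ⟨N, hfix, he⟩ := hlace.exists_bound
  refine ⟨fun k hk => ?_, fun k hk => ?_⟩
  · have hasc : (w 1)⁻¹ k < (w 1)⁻¹ (k + 1) := by
      refine lt_of_le_of_ne (not_lt.mp fun hdesc => ?_) ((w 1)⁻¹.injective.ne (by omega))
      exact (codim_lt_diagLength_of_first_inv_descent hfix he hn hk hdesc).ne' hmin
    rw [ell_swap_mul (hlace.2 1 le_rfl hn).1 hasc]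
    exact ⟨Nat.lt_succ_self _, hasc⟩
  · have hasc : w n k < w n (k + 1) := by
      refine lt_of_le_of_ne (not_lt.mp fun hdesc => ?_) ((w n).injective.ne (by omega))
      exact (codim_lt_diagLength_of_last_descent hfix he hn hk hdesc).ne' hmin
    rw [ell_mul_swap (hlace.2 n hn le_rfl).1 hasc]
    exact ⟨Nat.lt_succ_self _, hasc⟩
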